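/- Let d ≥ 1, s > 0, μ ≥ 0, and f ∈ L²(𝕋^d;ℂ) with f̂_0 = 0 and |f|_μ < ∞, and let u be the solution of (−Δ)^s u = f, i.e. û_k = |k|^{−2s} f̂_k for k ≠ 0 and û_0 = 0. Let n ≥ 2 be even, let f_n = P_n f, and let u_n = (2π)^{−d} Σ_{k∈Z_n^d, k≠0} |k|^{−2s} (f_n)∧_k φ^k be the solution of the discrete problem (−Δ)^s u_n = f_n. Then |u − u_n|_s ≤ (n/2)^{−(μ+s)} |f|_μ. -/

import Mathlib

open MeasureTheory Real

noncomputable section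

/-- Fundamental domain `(0, 2π]^d` of the `d`-dimensional torus `𝕋^d = (ℝ/2πℤ)^d`. -/
def Box (d : ℕ) : Set (Fin d → ℝ) := Set.univ.pi fun _ => Set.Ioc 0 (2 * π)

/-- Lebesgue measure on the torus, realized on the fundamental domain. -/
def tMeas (d : ℕ) : Measure (Fin d → ℝ) := MeasureTheory.volume.restrict (Box d)

/-- The character `φ^k(x) = e^{i k·x}`. -/
def phi (d : ℕ) (k : Fin d → ℤ) (x : Fin d → ℝ) : ℂ :=
  Complex.exp (Complex.I * ∑ i, (k i : ℂ) * (x i : ℂ))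

/-- Fourier coefficient `v̂_k = ∫_{𝕋^d} v(x) e^{-i k·x} dx`. -/
def fc (d : ℕ) (v : (Fin d → ℝ) → ℂ) (k : Fin d → ℤ) : ℂ :=
  ∫ x, v x * Complex.exp (-(Complex.I * ∑ i, (k i : ℂ) * (x i : ℂ))) ∂(tMeas d)

/-- Euclidean norm `|k|` of a frequency vector `k ∈ ℤ^d`. -/
def knorm (d : ℕ) (k : Fin d → ℤ) : ℝ := Real.sqrt (∑ i, ((k i : ℝ)) ^ 2)

/-- Summand family `|k|^{2μ}|c_k|²`, `k ≠ 0`, of the squared Sobolev seminorm of a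
coefficient sequence. -/
def sobFamC (d : ℕ) (μ : ℝ) (c : (Fin d → ℤ) → ℂ) :
    {k : Fin d → ℤ // k ≠ 0} → ℝ :=
  fun k => knorm d k.1 ^ (2 * μ) * ‖c k.1‖ ^ 2

/-- Summand family of the squared Sobolev seminorm `|v|_μ²`. -/
def sobFam (d : ℕ) (μ : ℝ) (v : (Fin d → ℝ) → ℂ) := sobFamC d μ (fc d v)

/-- Sobolev seminorm of order `μ` of a coefficient sequence. -/
def sobNormC (d : ℕ) (μ : ℝ) (c : (Fin d → ℤ) → ℂ) : ℝ :=
  Real.sqrt (∑' k, sobFamC d μ c k)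

/-- Sobolev seminorm `|v|_μ = (Σ_{k≠0} |k|^{2μ}|v̂_k|²)^{1/2}`. -/
def sobNorm (d : ℕ) (μ : ℝ) (v : (Fin d → ℝ) → ℂ) : ℝ := sobNormC d μ (fc d v)

/-- Frequency set `Z_n^d = {k : -n/2 ≤ k_i ≤ n/2 - 1}`. -/
def Znd (d n : ℕ) : Finset (Fin d → ℤ) :=
  Fintype.piFinset fun _ => Finset.Icc (-((n : ℤ) / 2)) ((n : ℤ) / 2 - 1)

/-- Space `S_n` of trigonometric polynomials with frequencies in `Z_n^d`. -/
def Sn (d n : ℕ) : Set ((Fin d → ℝ) → ℂ) :=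
  {v | ∃ c : (Fin d → ℤ) → ℂ, v = fun x => ∑ k ∈ Znd d n, c k * phi d k x}

/-- L² projection `P_n v = (2π)^{-d} Σ_{k ∈ Z_n^d} v̂_k φ^k`. -/
def Pn (d n : ℕ) (v : (Fin d → ℝ) → ℂ) : (Fin d → ℝ) → ℂ :=
  fun x => (((2 * π) ^ d : ℝ))⁻¹ • ∑ k ∈ Znd d n, fc d v k * phi d k x

/-- Index set `{0,…,n-1}^d` of the interpolation grid. -/
def gridIdx (d n : ℕ) : Finset (Fin d → ℕ) := Fintype.piFinset fun _ => Finset.range n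

/-- Grid point `x_j = (2π/n) j`. -/
def gridPt (d n : ℕ) (j : Fin d → ℕ) : Fin d → ℝ := fun i => 2 * π / (n : ℝ) * (j i : ℝ)

/-- Trigonometric polynomial with discrete Fourier coefficients
`c_k = n^{-d} Σ_j V_j e^{-i k·x_j}` built from grid values `V`. -/
def interpOfValues (d n : ℕ) (V : (Fin d → ℕ) → ℂ) : (Fin d → ℝ) → ℂ :=
  fun x => ∑ k ∈ Znd d n,
    (((n : ℂ) ^ d)⁻¹ * ∑ j ∈ gridIdx d n,
        V j * Complex.exp (-(Complex.I * ∑ i, (k i : ℂ) * (gridPt d n j i : ℂ)))) * phi d k x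

/-- Trigonometric interpolant `I_n v`. -/
def Interp (d n : ℕ) (v : (Fin d → ℝ) → ℂ) : (Fin d → ℝ) → ℂ :=
  interpOfValues d n fun j => v (gridPt d n j)

/-- Fractional Laplacian `(−Δ)^σ` realized on trigonometric polynomials in `S_n`. -/
def fLap (d n : ℕ) (σ : ℝ) (v : (Fin d → ℝ) → ℂ) : (Fin d → ℝ) → ℂ :=
  fun x => (((2 * π) ^ d : ℝ))⁻¹ •
    ∑ k ∈ (Znd d n).erase 0, (knorm d k ^ (2 * σ)) • (fc d v k * phi d k x)

/-- Membership in `H^μ(𝕋^d;ℂ)`: `v ∈ L²` with `|v|_μ < ∞`. -/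
def memH (d : ℕ) (μ : ℝ) (v : (Fin d → ℝ) → ℂ) : Prop :=
  MemLp v 2 (tMeas d) ∧ Summable (sobFam d μ v)

/-- Membership in `Ḣ^μ(𝕋^d;ℂ)`: additionally `v̂_0 = 0`. -/
def memHdot (d : ℕ) (μ : ℝ) (v : (Fin d → ℝ) → ℂ) : Prop :=
  memH d μ v ∧ fc d v 0 = 0

/-- Solution of a discrete spectral problem: given a Fourier multiplier `m` and data
`g`, returns `(2π)^{-d} Σ_{k ∈ Z_n^d, k ≠ 0} m(k) ĝ_k φ^k`. -/
def discSol (d n : ℕ) (m : (Fin d → ℤ) → ℝ) (g : (Fin d → ℝ) → ℂ) : (Fin d → ℝ) → ℂ :=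
  fun x => (((2 * π) ^ d : ℝ))⁻¹ • ∑ k ∈ (Znd d n).erase 0, m k • (fc d g k * phi d k x)

/-!
By orthogonality of the characters on `(0, 2π]^d`, `P_n` truncates the Fourier series to
`Z_n^d`, so `u - u_n` has coefficients `0` on `Z_n^d` and `|k|^{-2s} f̂_k` off it. Off `Z_n^d`
some `|k_i| ≥ n/2`, hence `|k|^{2s} |k|^{-4s} = |k|^{-2(μ+s)} |k|^{2μ} ≤ (n/2)^{-2(μ+s)} |k|^{2μ}`,
and summing over `k` gives the estimate.
-/

lemma integral_Ioc_exp_I_mul_int_mul (m : ℤ) :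
    ∫ t in Set.Ioc 0 (2 * π), Complex.exp (Complex.I * (m * t)) =
      if m = 0 then ((2 * π : ℝ) : ℂ) else 0 := by
  rw [← intervalIntegral.integral_of_le (by positivity)]
  split_ifs with hm
  · simp [hm]
  · have hc : Complex.I * m ≠ 0 := mul_ne_zero Complex.I_ne_zero (by exact_mod_cast hm)
    have hperiod : Complex.I * m * ((2 * π : ℝ) : ℂ) = m * (2 * π * Complex.I) := by
      push_cast; ring
    simp_rw [← mul_assoc]
    rw [integral_exp_mul_complex hc, hperiod, Complex.exp_int_mul_two_pi_mul_I]
    simp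

lemma tMeas_eq_pi (d : ℕ) : tMeas d = Measure.pi fun _ => volume.restrict (Set.Ioc 0 (2 * π)) := by
  rw [tMeas, Box, volume_pi, Measure.restrict_pi_pi]

instance (d : ℕ) : IsFiniteMeasure (tMeas d) := by
  rw [tMeas_eq_pi]; infer_instance

lemma phi_eq_prod (d : ℕ) (k : Fin d → ℤ) (x : Fin d → ℝ) :
    phi d k x = ∏ i, Complex.exp (Complex.I * (k i * x i)) := by
  rw [phi, Finset.mul_sum, Complex.exp_sum]

lemma phi_add (d : ℕ) (k l : Fin d → ℤ) (x : Fin d → ℝ) :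
    phi d (k + l) x = phi d k x * phi d l x := by
  simp only [phi, ← Complex.exp_add, ← mul_add, ← Finset.sum_add_distrib, Pi.add_apply,
    Int.cast_add, add_mul]

lemma norm_phi (d : ℕ) (k : Fin d → ℤ) (x : Fin d → ℝ) : ‖phi d k x‖ = 1 := by
  rw [phi, mul_comm]
  exact_mod_cast Complex.norm_exp_ofReal_mul_I (∑ i, (k i : ℝ) * x i)

lemma continuous_phi (d : ℕ) (k : Fin d → ℤ) : Continuous (phi d k) := by
  unfold phi; fun_prop

lemma integral_phi (d : ℕ) (k : Fin d → ℤ) :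
    ∫ x, phi d k x ∂tMeas d = if k = 0 then (((2 * π) ^ d : ℝ) : ℂ) else 0 := by
  simp only [phi_eq_prod, tMeas_eq_pi]
  rw [integral_fintype_prod_eq_prod (fun i (t : ℝ) => Complex.exp (Complex.I * (k i * t)))]
  simp only [integral_Ioc_exp_I_mul_int_mul]
  split_ifs with hk
  · simp [hk]
  · obtain ⟨i, hi⟩ := Function.ne_iff.mp hk
    exact Finset.prod_eq_zero (Finset.mem_univ i) (if_neg hi)

lemma fc_eq_integral_mul_phi_neg (d : ℕ) (v : (Fin d → ℝ) → ℂ) (l : Fin d → ℤ) :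
    fc d v l = ∫ x, v x * phi d (-l) x ∂tMeas d := by
  simp [fc, phi]

lemma integrable_phi (d : ℕ) (k : Fin d → ℤ) : Integrable (phi d k) (tMeas d) :=
  .of_bound (continuous_phi d k).aestronglyMeasurable 1 (.of_forall fun x => (norm_phi d k x).le)

lemma integrable_mul_phi {d : ℕ} {v : (Fin d → ℝ) → ℂ} (hv : Integrable v (tMeas d))
    (k : Fin d → ℤ) : Integrable (fun x => v x * phi d k x) (tMeas d) :=
  hv.mul_bdd (continuous_phi d k).aestronglyMeasurable
    (.of_forall fun x => (norm_phi d k x).le)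

lemma fc_phi (d : ℕ) (k l : Fin d → ℤ) :
    fc d (phi d k) l = if k = l then (((2 * π) ^ d : ℝ) : ℂ) else 0 := by
  simp_rw [fc_eq_integral_mul_phi_neg, ← phi_add, integral_phi, ← sub_eq_add_neg, sub_eq_zero]

lemma fc_sub {d : ℕ} {v w : (Fin d → ℝ) → ℂ} (hv : Integrable v (tMeas d))
    (hw : Integrable w (tMeas d)) (l : Fin d → ℤ) :
    fc d (fun x => v x - w x) l = fc d v l - fc d w l := by
  simp_rw [fc_eq_integral_mul_phi_neg, sub_mul]
  exact integral_sub (integrable_mul_phi hv _) (integrable_mul_phi hw _)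

lemma fc_inv_smul_sum_mul_phi (d : ℕ) (F : Finset (Fin d → ℤ)) (c : (Fin d → ℤ) → ℂ)
    (l : Fin d → ℤ) :
    fc d (fun x => (((2 * π) ^ d : ℝ))⁻¹ • ∑ k ∈ F, c k * phi d k x) l =
      if l ∈ F then c l else 0 := by
  have hint : ∀ k, Integrable (fun x => c k * phi d k x * phi d (-l) x) (tMeas d) := fun k =>
    integrable_mul_phi ((integrable_phi d k).const_mul (c k)) (-l)
  simp_rw [fc_eq_integral_mul_phi_neg, smul_mul_assoc, Finset.sum_mul, integral_smul,
    integral_finsetSum F fun k _ => hint k, mul_assoc, integral_const_mul,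
    ← fc_eq_integral_mul_phi_neg, fc_phi, mul_ite, mul_zero, Finset.sum_ite_eq']
  split_ifs
  · rw [Complex.real_smul, mul_left_comm, ← Complex.ofReal_mul, inv_mul_cancel₀ (by positivity),
      Complex.ofReal_one, mul_one]
  · exact smul_zero _

lemma fc_Pn (d n : ℕ) (f : (Fin d → ℝ) → ℂ) (l : Fin d → ℤ) :
    fc d (Pn d n f) l = if l ∈ Znd d n then fc d f l else 0 :=
  fc_inv_smul_sum_mul_phi d _ _ l

lemma fc_discSol (d n : ℕ) (m : (Fin d → ℤ) → ℝ) (g : (Fin d → ℝ) → ℂ) (l : Fin d → ℤ) :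
    fc d (discSol d n m g) l = if l ∈ (Znd d n).erase 0 then m l • fc d g l else 0 := by
  unfold discSol
  simp_rw [← smul_mul_assoc]
  exact fc_inv_smul_sum_mul_phi d _ _ l

lemma integrable_discSol (d n : ℕ) (m : (Fin d → ℤ) → ℝ) (g : (Fin d → ℝ) → ℂ) :
    Integrable (discSol d n m g) (tMeas d) := by
  unfold discSol
  exact (integrable_finsetSum _ fun k _ => ((integrable_phi d k).const_mul _).smul (m k)).smul
    (((2 * π) ^ d : ℝ))⁻¹

lemma sobFamC_nonneg (d : ℕ) (μ : ℝ) (c : (Fin d → ℤ) → ℂ) (k : {k : Fin d → ℤ // k ≠ 0}) :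
    0 ≤ sobFamC d μ c k :=
  mul_nonneg (Real.rpow_nonneg (Real.sqrt_nonneg _) _) (sq_nonneg _)

lemma sobNormC_le_mul_of_sobFamC_le {d : ℕ} {σ μ C : ℝ} {c c' : (Fin d → ℤ) → ℂ} (hC : 0 ≤ C)
    (hc' : Summable (sobFamC d μ c')) (h : ∀ k, sobFamC d σ c k ≤ C ^ 2 * sobFamC d μ c' k) :
    sobNormC d σ c ≤ C * sobNormC d μ c' := by
  have hsum : ∑' k, sobFamC d σ c k ≤ C ^ 2 * ∑' k, sobFamC d μ c' k := by
    rw [← tsum_mul_left]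
    exact (hc'.mul_left _).of_nonneg_of_le (sobFamC_nonneg d σ c) h |>.tsum_le_tsum h
      (hc'.mul_left _)
  calc sobNormC d σ c ≤ √(C ^ 2 * ∑' k, sobFamC d μ c' k) := Real.sqrt_le_sqrt hsum
    _ = C * sobNormC d μ c' := by rw [Real.sqrt_mul (sq_nonneg C), Real.sqrt_sq hC, sobNormC]

lemma knorm_pos {d : ℕ} {k : Fin d → ℤ} (hk : k ≠ 0) : 0 < knorm d k := by
  obtain ⟨i, hi⟩ := Function.ne_iff.mp hk
  have hi' : (k i : ℝ) ≠ 0 := by exact_mod_cast hi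
  exact Real.sqrt_pos.mpr (Finset.sum_pos' (fun j _ => sq_nonneg _)
    ⟨i, Finset.mem_univ i, by positivity⟩)

lemma abs_le_knorm (d : ℕ) (k : Fin d → ℤ) (i : Fin d) : |(k i : ℝ)| ≤ knorm d k := by
  rw [← Real.sqrt_sq_eq_abs]
  exact Real.sqrt_le_sqrt
    (Finset.single_le_sum (fun j _ => sq_nonneg (k j : ℝ)) (Finset.mem_univ i))

lemma half_le_knorm_of_notMem_Znd {d n : ℕ} (hne : Even n) {k : Fin d → ℤ} (hk : k ∉ Znd d n) :
    (n : ℝ) / 2 ≤ knorm d k := by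
  obtain ⟨r, rfl⟩ := hne
  simp only [Znd, Fintype.mem_piFinset, Finset.mem_Icc, not_forall] at hk
  obtain ⟨i, hi⟩ := hk
  have hr : (r : ℤ) ≤ |k i| := by rw [le_abs]; omega
  calc ((r + r : ℕ) : ℝ) / 2 = (r : ℤ) := by push_cast; ring
    _ ≤ |(k i : ℝ)| := by exact_mod_cast hr
    _ ≤ knorm d k := abs_le_knorm d k i

lemma rpow_mul_rpow_neg_sq_le {N K s μ : ℝ} (hN : 0 < N) (hNK : N ≤ K) (hμs : 0 ≤ μ + s) :
    K ^ (2 * s) * (K ^ (-(2 * s))) ^ 2 ≤ (N ^ (-(μ + s))) ^ 2 * K ^ (2 * μ) := by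
  have hK : 0 < K := hN.trans_le hNK
  have hsq : ∀ {x : ℝ}, 0 < x → ∀ a : ℝ, (x ^ a) ^ 2 = x ^ (2 * a) := fun hx a => by
    rw [← Real.rpow_natCast, ← Real.rpow_mul hx.le, mul_comm]; norm_num
  calc K ^ (2 * s) * (K ^ (-(2 * s))) ^ 2 = K ^ (-(2 * (μ + s))) * K ^ (2 * μ) := by
        rw [hsq hK, ← Real.rpow_add hK, ← Real.rpow_add hK]; ring_nf
    _ ≤ (N ^ (-(μ + s))) ^ 2 * K ^ (2 * μ) := by
        rw [hsq hN, mul_neg]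
        exact mul_le_mul_of_nonneg_right (Real.rpow_le_rpow_of_nonpos hN hNK (by linarith))
          (Real.rpow_nonneg hK.le _)

lemma sobFamC_le_of_eq_multiplier_off_Znd {d n : ℕ} (hn : 0 < n) (hne : Even n) {s μ : ℝ}
    (hμs : 0 ≤ μ + s) {c e : (Fin d → ℤ) → ℂ}
    (he : ∀ k ≠ 0, e k = if k ∈ Znd d n then 0 else knorm d k ^ (-(2 * s)) • c k)
    (k : {k : Fin d → ℤ // k ≠ 0}) :
    sobFamC d s e k ≤ (((n : ℝ) / 2) ^ (-(μ + s))) ^ 2 * sobFamC d μ c k := by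
  obtain ⟨k, hk⟩ := k
  by_cases hkZ : k ∈ Znd d n
  · have hzero : sobFamC d s e ⟨k, hk⟩ = 0 := by simp [sobFamC, he k hk, hkZ]
    rw [hzero]
    exact mul_nonneg (sq_nonneg _) (sobFamC_nonneg d μ c _)
  · have hK := knorm_pos hk
    simp only [sobFamC, he k hk, if_neg hkZ, norm_smul,
      Real.norm_of_nonneg (Real.rpow_nonneg hK.le _), mul_pow, ← mul_assoc]
    exact mul_le_mul_of_nonneg_right (rpow_mul_rpow_neg_sq_le (by positivity)
      (half_le_knorm_of_notMem_Znd hne hkZ) hμs) (sq_nonneg _)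

theorem fractional_poisson_projection_error_general (d n : ℕ) (hn : 2 ≤ n)
    (hne : Even n) (s mu : ℝ) (hs : 0 < s) (hmu : 0 ≤ mu)
    (f : (Fin d → ℝ) → ℂ)
    (hfmu : Summable (sobFam d mu f))
    (u : (Fin d → ℝ) → ℂ) (hu : MemLp u 2 (tMeas d))
    (huk : ∀ k : Fin d → ℤ, k ≠ 0 →
      fc d u k = ((knorm d k ^ (-(2 * s)) : ℝ) : ℂ) * fc d f k) :
    sobNorm d s
        (fun x => u x - discSol d n (fun k => knorm d k ^ (-(2 * s))) (Pn d n f) x) ≤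
      ((n : ℝ) / 2) ^ (-(mu + s)) * sobNorm d mu f := by
  refine sobNormC_le_mul_of_sobFamC_le (Real.rpow_nonneg (by positivity) _) hfmu
    (sobFamC_le_of_eq_multiplier_off_Znd (by omega) hne (by positivity) fun k hk => ?_)
  rw [fc_sub (hu.integrable one_le_two) (integrable_discSol ..), fc_discSol, fc_Pn, huk k hk]
  by_cases hkZ : k ∈ Znd d n <;> simp [hkZ, hk, Complex.real_smul]

/-- error estimate `|u - u_n|_s ≤ (n/2)^{-(μ+s)} |f|_μ` for the spectral
approximation of the fractional Poisson problem with projected data `f_n = P_n f`. -/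
theorem fractional_poisson_projection_error (d n : ℕ) (hd : 1 ≤ d) (hn : 2 ≤ n)
    (hne : Even n) (s mu : ℝ) (hs : 0 < s) (hmu : 0 ≤ mu)
    (f : (Fin d → ℝ) → ℂ) (hf : MemLp f 2 (tMeas d)) (hf0 : fc d f 0 = 0)
    (hfmu : Summable (sobFam d mu f))
    (u : (Fin d → ℝ) → ℂ) (hu : MemLp u 2 (tMeas d)) (hu0 : fc d u 0 = 0)
    (huk : ∀ k : Fin d → ℤ, k ≠ 0 →
      fc d u k = ((knorm d k ^ (-(2 * s)) : ℝ) : ℂ) * fc d f k) :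
    sobNorm d s
        (fun x => u x - discSol d n (fun k => knorm d k ^ (-(2 * s))) (Pn d n f) x) ≤
      ((n : ℝ) / 2) ^ (-(mu + s)) * sobNorm d mu f :=
  fractional_poisson_projection_error_general d n hn hne s mu hs hmu f hfmu u hu huk

end
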